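/- Let X be a real-valued stochastic process indexed by ℝ with continuous sample paths on a probability space (Ω, 𝔉, P), which is strictly stationary and satisfies the monotone-joint-exceedance assumption (Assumption 1) at level u. Fix S > 0, s̃ ∈ (0, S) and a threshold u ∈ ℝ, and for h ∈ [0, S − s̃] define μ(h) = P( sup_{s∈[h, s̃+h]} X(s) ≥ u and sup_{s∈[0,S]∖[h, s̃+h]} X(s) < u ). Then μ(h) is a decreasing function of the distance of the interval [h, s̃+h] to the boundary of [0,S]: for all h₁, h₂ ∈ [0, S − s̃], if min(h₁, S − s̃ − h₁) ≤ min(h₂, S − s̃ − h₂) then μ(h₁) ≥ μ(h₂). -/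

import Mathlib

/-!
Shifting by `h` (stationarity) turns `μ(h)` into the probability that the path exceeds `u` on
`[0, st]` while staying below `u` on gaps of lengths `h` and `S - st - h` on either side of it.
The events with gaps `(a + δ, b)` and `(a, b + δ)` are the event with gaps `(a, b)` intersected
with non-exceedance on a strip of length `δ` at distance `a`, resp. `b`, from `[0, st]`. Passing to
complements, Assumption 1 says non-exceedance is likelier on the farther strip, so `μ` grows as
the window approaches the boundary. At `h = 0` the left gap is empty, so `μ(0)` dominates the
event with gaps `(0, S - st)`, which still asks the path to stay below `u` at `0`; the two end
values `μ(0)` and `μ(S - st)` agree by Assumption 1 for strips at distance `0`.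
-/

open MeasureTheory

noncomputable def setDist (A B : Set ℝ) : ℝ :=
  sInf (Set.image2 dist A B)

open Set
open scoped ENNReal

theorem sSup_eq_sSup_of_subset_of_subset_closure {α : Type*} [ConditionallyCompleteLinearOrder α]
    [TopologicalSpace α] [ClosedIicTopology α] {s t : Set α} (hst : s ⊆ t) (hts : t ⊆ closure s) :
    sSup s = sSup t := by
  have hub : upperBounds s = upperBounds t :=
    (upperBounds_closure s ▸ upperBounds_mono_set hts).antisymm (upperBounds_mono_set hst)
  rcases s.eq_empty_or_nonempty with rfl | hs
  · rw [closure_empty, subset_empty_iff] at hts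
    rw [hts]
  by_cases hbdd : BddAbove s
  · exact (((isLUB_congr hub).1 (isLUB_csSup hs hbdd)).csSup_eq (hs.mono hst)).symm
  · rw [csSup_of_not_bddAbove hbdd, csSup_of_not_bddAbove (s := t) (by rwa [BddAbove, ← hub])]

theorem sSup_image_lt_iff_of_isBounded {f : ℝ → ℝ} {D : Set ℝ} (hf : Continuous f)
    (hD : Bornology.IsBounded D) (hne : D.Nonempty) (u : ℝ) :
    sSup (f '' D) < u ↔ ∀ x ∈ closure D, f x < u := by
  rw [sSup_eq_sSup_of_subset_of_subset_closure (image_mono subset_closure)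
    (image_closure_subset_closure_image hf)]
  exact hD.isCompact_closure.sSup_lt_iff_of_continuous hne.closure hf.continuousOn u

/-- On continuous paths the supremum over `D` is a supremum over a countable dense subset of `D`,
hence measurable for the product σ-algebra. -/
theorem exists_measurable_eq_sSup_image (D : Set ℝ) :
    ∃ F : (ℝ → ℝ) → ℝ, Measurable F ∧ ∀ f, Continuous f → F f = sSup (f '' D) := by
  obtain ⟨C, hCD, hC, hDC⟩ :=
    (TopologicalSpace.IsSeparable.of_separableSpace D).exists_countable_dense_subset
  have := hC.to_subtype
  refine ⟨fun f => ⨆ c : C, f c, Measurable.iSup fun c => measurable_pi_apply _, fun f hf => ?_⟩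
  show ⨆ c : C, f c = _
  rw [← sSup_image']
  exact sSup_eq_sSup_of_subset_of_subset_closure (image_mono hCD)
    ((image_mono hDC).trans (image_closure_subset_closure_image hf))

theorem Icc_diff_Icc_eq_Ico_union_Ioc {a b c d : ℝ} (hcb : c ≤ b) (had : a ≤ d) :
    Icc c d \ Icc a b = Ico c a ∪ Ioc b d := by
  ext x
  simp only [mem_sdiff, mem_Icc, mem_union, mem_Ico, mem_Ioc]
  constructor
  · rintro ⟨⟨hcx, hxd⟩, hx⟩
    by_cases hax : a ≤ x
    · exact Or.inr ⟨lt_of_not_ge fun hxb => hx ⟨hax, hxb⟩, hxd⟩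
    · exact Or.inl ⟨hcx, lt_of_not_ge hax⟩
  · rintro (⟨hcx, hxa⟩ | ⟨hbx, hxd⟩)
    · exact ⟨⟨hcx, by linarith⟩, fun h => by linarith [h.1]⟩
    · exact ⟨⟨by linarith, hxd⟩, fun h => by linarith [h.2]⟩

theorem Icc_disjoint_interior_Icc_of_le {a b c d : ℝ} (hda : d ≤ a) :
    Disjoint (Icc c d) (interior (Icc a b)) := by
  rw [interior_Icc]
  exact disjoint_left.2 fun x hx hx' => by linarith [hx.2, hx'.1]

theorem Icc_disjoint_interior_Icc_of_ge {a b c d : ℝ} (hbc : b ≤ c) :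
    Disjoint (Icc c d) (interior (Icc a b)) := by
  rw [interior_Icc]
  exact disjoint_left.2 fun x hx hx' => by linarith [hx.1, hx'.2]

theorem setDist_comm (A B : Set ℝ) : setDist A B = setDist B A := by
  simp only [setDist, image2_swap dist A B, dist_comm]

theorem setDist_Icc_Icc_of_le {a b c d : ℝ} (hab : a ≤ b) (hbc : b ≤ c) (hcd : c ≤ d) :
    setDist (Icc a b) (Icc c d) = c - b := by
  have hbc_mem : dist b c ∈ image2 dist (Icc a b) (Icc c d) :=
    mem_image2_of_mem (right_mem_Icc.2 hab) (left_mem_Icc.2 hcd)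
  have hdist : dist b c = c - b := by rw [dist_comm, Real.dist_eq, abs_of_nonneg (by linarith)]
  apply le_antisymm
  · refine hdist ▸ csInf_le ⟨0, ?_⟩ hbc_mem
    rintro _ ⟨x, -, y, -, rfl⟩
    exact dist_nonneg
  · refine le_csInf ⟨_, hbc_mem⟩ ?_
    rintro _ ⟨x, hx, y, hy, rfl⟩
    rw [dist_comm, Real.dist_eq]
    linarith [le_abs_self (y - x), hx.2, hy.1]

section Events

variable {Ω : Type*}

def exceedsOn (X : Ω → ℝ → ℝ) (u : ℝ) (I : Set ℝ) : Set Ω :=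
  {ω | u ≤ sSup (X ω '' I)}

def staysBelowOn (X : Ω → ℝ → ℝ) (u : ℝ) (K : Set ℝ) : Set Ω :=
  {ω | ∀ s ∈ K, X ω s < u}

def isolatedExceedance (X : Ω → ℝ → ℝ) (u st a b : ℝ) : Set Ω :=
  exceedsOn X u (Icc 0 st) ∩ staysBelowOn X u (Icc (-a) 0 ∪ Icc st (st + b))

variable {X : Ω → ℝ → ℝ} {u : ℝ}

theorem staysBelowOn_union (K K' : Set ℝ) :
    staysBelowOn X u (K ∪ K') = staysBelowOn X u K ∩ staysBelowOn X u K' := by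
  ext ω
  simp only [staysBelowOn, mem_union, mem_inter_iff, mem_ofPred_eq, or_imp, forall_and]

theorem staysBelowOn_anti {K K' : Set ℝ} (h : K ⊆ K') :
    staysBelowOn X u K' ⊆ staysBelowOn X u K :=
  fun _ hω s hs => hω s (h hs)

theorem staysBelowOn_eq_compl_exceedsOn (hCont : ∀ ω, Continuous (X ω)) {K : Set ℝ}
    (hK : IsCompact K) (hne : K.Nonempty) : staysBelowOn X u K = (exceedsOn X u K)ᶜ := by
  ext ω
  simp only [staysBelowOn, exceedsOn, mem_compl_iff, mem_ofPred_eq, not_le]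
  exact (hK.sSup_lt_iff_of_continuous hne (hCont ω).continuousOn u).symm

theorem setOf_le_sSup_and_sSup_lt_eq (hCont : ∀ ω, Continuous (X ω)) (I : Set ℝ) {D : Set ℝ}
    (hD : Bornology.IsBounded D) (hne : D.Nonempty) :
    {ω | u ≤ sSup (X ω '' I) ∧ sSup (X ω '' D) < u} =
      exceedsOn X u I ∩ staysBelowOn X u (closure D) := by
  ext ω
  exact and_congr_right' (sSup_image_lt_iff_of_isBounded (hCont ω) hD hne u)

theorem isolatedExceedance_add_left {st a b δ : ℝ} (ha : 0 ≤ a) (hδ : 0 ≤ δ) :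
    isolatedExceedance X u st (a + δ) b =
      isolatedExceedance X u st a b ∩ staysBelowOn X u (Icc (-(a + δ)) (-a)) := by
  rw [isolatedExceedance, isolatedExceedance, inter_assoc, ← staysBelowOn_union,
    union_right_comm, union_comm (Icc (-a) 0),
    Icc_union_Icc_eq_Icc (by linarith) (by linarith)]

theorem isolatedExceedance_add_right {st a b δ : ℝ} (hb : 0 ≤ b) (hδ : 0 ≤ δ) :
    isolatedExceedance X u st a (b + δ) =
      isolatedExceedance X u st a b ∩ staysBelowOn X u (Icc (st + b) (st + b + δ)) := by
  rw [isolatedExceedance, isolatedExceedance, inter_assoc, ← staysBelowOn_union, union_assoc,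
    Icc_union_Icc_eq_Icc (by linarith) (by linarith), add_assoc]

end Events

section Measure

variable {Ω : Type*} [MeasurableSpace Ω]

/-- Assumption 1 of the paper at level `u`, with the event `H` written as non-exceedance on
`⋃ i, [c i, d i]`. -/
def MonotoneJointExceedance (P : Measure Ω) (X : Ω → ℝ → ℝ) (u : ℝ) : Prop :=
  ∀ a b : ℝ, a ≤ b → ∀ (n : ℕ) (c d : Fin n → ℝ), (∀ i, c i ≤ d i) →
    ∀ c₁ d₁ c₂ d₂ : ℝ, c₁ < d₁ → d₁ - c₁ = d₂ - c₂ →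
    Disjoint (Icc c₁ d₁) (interior (Icc a b)) →
    Disjoint (Icc c₂ d₂) (interior (Icc a b)) →
    setDist (Icc a b) (Icc c₂ d₂) ≤ setDist (Icc a b) (Icc c₁ d₁) →
    P {ω | u ≤ sSup (X ω '' Icc a b) ∧ u ≤ sSup (X ω '' Icc c₁ d₁) ∧
        ∀ i, ∀ s ∈ Icc (c i) (d i), X ω s < u}
      ≤ P {ω | u ≤ sSup (X ω '' Icc a b) ∧ u ≤ sSup (X ω '' Icc c₂ d₂) ∧
          ∀ i, ∀ s ∈ Icc (c i) (d i), X ω s < u}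

variable {P : Measure Ω} {X : Ω → ℝ → ℝ} {u : ℝ}

theorem measurableSet_exceedsOn (hCont : ∀ ω, Continuous (X ω))
    (hMeas : ∀ s : ℝ, Measurable (fun ω => X ω s)) (I : Set ℝ) :
    MeasurableSet (exceedsOn X u I) := by
  obtain ⟨F, hF, hFX⟩ := exists_measurable_eq_sSup_image I
  have hE : exceedsOn X u I = {ω | u ≤ F (X ω)} := by
    ext ω
    simp only [exceedsOn, mem_ofPred_eq, hFX _ (hCont ω)]
  rw [hE]
  exact measurableSet_le measurable_const (hF.comp (measurable_pi_iff.2 hMeas))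

theorem measure_inter_exceedsOn_add_measure_inter_staysBelowOn (hCont : ∀ ω, Continuous (X ω))
    (hMeas : ∀ s : ℝ, Measurable (fun ω => X ω s)) {K : Set ℝ} (hK : IsCompact K)
    (hne : K.Nonempty) (T : Set Ω) :
    P (T ∩ exceedsOn X u K) + P (T ∩ staysBelowOn X u K) = P T := by
  rw [staysBelowOn_eq_compl_exceedsOn hCont hK hne, ← sdiff_eq]
  exact measure_inter_add_sdiff T (measurableSet_exceedsOn hCont hMeas K)

theorem measure_staysBelowOn_le_of_setDist_le [IsFiniteMeasure P]
    (hA : MonotoneJointExceedance P X u) (hCont : ∀ ω, Continuous (X ω))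
    (hMeas : ∀ s : ℝ, Measurable (fun ω => X ω s)) {a b : ℝ} (hab : a ≤ b) {n : ℕ}
    {c d : Fin n → ℝ} (hcd : ∀ i, c i ≤ d i) {c₁ d₁ c₂ d₂ : ℝ} (h₁ : c₁ < d₁)
    (hlen : d₁ - c₁ = d₂ - c₂) (hdisj₁ : Disjoint (Icc c₁ d₁) (interior (Icc a b)))
    (hdisj₂ : Disjoint (Icc c₂ d₂) (interior (Icc a b)))
    (hdist : setDist (Icc a b) (Icc c₂ d₂) ≤ setDist (Icc a b) (Icc c₁ d₁)) :
    P (exceedsOn X u (Icc a b) ∩ staysBelowOn X u (⋃ i, Icc (c i) (d i)) ∩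
        staysBelowOn X u (Icc c₂ d₂)) ≤
      P (exceedsOn X u (Icc a b) ∩ staysBelowOn X u (⋃ i, Icc (c i) (d i)) ∩
        staysBelowOn X u (Icc c₁ d₁)) := by
  set T := exceedsOn X u (Icc a b) ∩ staysBelowOn X u (⋃ i, Icc (c i) (d i))
  have hjoint : ∀ c' d' : ℝ, {ω | u ≤ sSup (X ω '' Icc a b) ∧ u ≤ sSup (X ω '' Icc c' d') ∧
      ∀ i, ∀ s ∈ Icc (c i) (d i), X ω s < u} = T ∩ exceedsOn X u (Icc c' d') := by
    intro c' d'
    ext ω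
    simp only [T, exceedsOn, staysBelowOn, mem_inter_iff, mem_ofPred_eq, mem_iUnion]
    grind
  have hjoint_le := hA a b hab n c d hcd c₁ d₁ c₂ d₂ h₁ hlen hdisj₁ hdisj₂ hdist
  rw [hjoint, hjoint] at hjoint_le
  have hsplit₁ := measure_inter_exceedsOn_add_measure_inter_staysBelowOn (P := P) (u := u)
    hCont hMeas isCompact_Icc (nonempty_Icc.2 h₁.le) T
  have hsplit₂ := measure_inter_exceedsOn_add_measure_inter_staysBelowOn (P := P) (u := u)
    hCont hMeas isCompact_Icc (nonempty_Icc.2 (by linarith : c₂ ≤ d₂)) T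
  refine (ENNReal.add_le_add_iff_left (measure_ne_top P (T ∩ exceedsOn X u (Icc c₂ d₂)))).1 ?_
  calc P (T ∩ exceedsOn X u (Icc c₂ d₂)) + P (T ∩ staysBelowOn X u (Icc c₂ d₂))
      = P (T ∩ exceedsOn X u (Icc c₁ d₁)) + P (T ∩ staysBelowOn X u (Icc c₁ d₁)) :=
        hsplit₂.trans hsplit₁.symm
    _ ≤ P (T ∩ exceedsOn X u (Icc c₂ d₂)) + P (T ∩ staysBelowOn X u (Icc c₁ d₁)) := by
        gcongr

theorem measure_preimage_shift_eq (hMeas : ∀ s : ℝ, Measurable (fun ω => X ω s))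
    (hStat : ∀ t : ℝ,
      Measure.map (fun ω => fun s => X ω (s + t)) P = Measure.map (fun ω => X ω) P)
    (t : ℝ) {A : Set (ℝ → ℝ)} (hA : MeasurableSet A) :
    P ((fun ω => fun s => X ω (s + t)) ⁻¹' A) = P ((fun ω => X ω) ⁻¹' A) := by
  rw [← Measure.map_apply (measurable_pi_iff.2 fun s => hMeas (s + t)) hA, hStat,
    Measure.map_apply (measurable_pi_iff.2 hMeas) hA]

theorem measure_le_sSup_and_sSup_lt_eq_preimage_add (hCont : ∀ ω, Continuous (X ω))
    (hMeas : ∀ s : ℝ, Measurable (fun ω => X ω s))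
    (hStat : ∀ t : ℝ,
      Measure.map (fun ω => fun s => X ω (s + t)) P = Measure.map (fun ω => X ω) P)
    (t : ℝ) (I D : Set ℝ) :
    P {ω | u ≤ sSup (X ω '' I) ∧ sSup (X ω '' D) < u} =
      P {ω | u ≤ sSup (X ω '' ((· + t) ⁻¹' I)) ∧ sSup (X ω '' ((· + t) ⁻¹' D)) < u} := by
  obtain ⟨F, hF, hFX⟩ := exists_measurable_eq_sSup_image ((· + t) ⁻¹' I)
  obtain ⟨G, hG, hGX⟩ := exists_measurable_eq_sSup_image ((· + t) ⁻¹' D)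
  have hA : MeasurableSet {f | u ≤ F f ∧ G f < u} :=
    (measurableSet_le measurable_const hF).inter (measurableSet_lt hG measurable_const)
  have hshift : ∀ ω (K : Set ℝ), (fun s => X ω (s + t)) '' ((· + t) ⁻¹' K) = X ω '' K := by
    intro ω K
    rw [show (fun s => X ω (s + t)) = X ω ∘ (· + t) from rfl, image_comp,
      image_preimage_eq K (add_right_surjective t)]
  convert measure_preimage_shift_eq hMeas hStat t hA using 2 <;> ext ω
  · have hcont : Continuous (fun s => X ω (s + t)) := (hCont ω).comp (continuous_add_const t)
    simp only [mem_preimage, mem_ofPred_eq, hFX _ hcont, hGX _ hcont, hshift]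
  · simp only [mem_preimage, mem_ofPred_eq, hFX _ (hCont ω), hGX _ (hCont ω)]

variable [IsFiniteMeasure P] {st a b : ℝ}

theorem measure_isolatedExceedance_add_le (hA : MonotoneJointExceedance P X u)
    (hCont : ∀ ω, Continuous (X ω)) (hMeas : ∀ s : ℝ, Measurable (fun ω => X ω s))
    (hst : 0 ≤ st) (ha : 0 ≤ a) (hb : 0 ≤ b) {δ : ℝ} (hδ : 0 ≤ δ) :
    (a ≤ b →
        P (isolatedExceedance X u st (a + δ) b) ≤ P (isolatedExceedance X u st a (b + δ))) ∧
      (b ≤ a →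
        P (isolatedExceedance X u st a (b + δ)) ≤ P (isolatedExceedance X u st (a + δ) b)) := by
  rcases hδ.eq_or_lt with rfl | hδ
  · simp
  have hgaps : Icc (-a) 0 ∪ Icc st (st + b) = ⋃ i, Icc (![-a, st] i) (![0, st + b] i) := by
    ext x
    simp [Fin.exists_fin_two]
  have hcd : ∀ i, ![-a, st] i ≤ ![0, st + b] i := by
    intro i
    fin_cases i <;> simp <;> linarith
  have hdisjL : Disjoint (Icc (-(a + δ)) (-a)) (interior (Icc 0 st)) :=
    Icc_disjoint_interior_Icc_of_le (by linarith)
  have hdisjR : Disjoint (Icc (st + b) (st + b + δ)) (interior (Icc 0 st)) :=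
    Icc_disjoint_interior_Icc_of_ge (by linarith)
  have hdistL : setDist (Icc 0 st) (Icc (-(a + δ)) (-a)) = a := by
    rw [setDist_comm, setDist_Icc_Icc_of_le (by linarith) (by linarith) hst]
    ring
  have hdistR : setDist (Icc 0 st) (Icc (st + b) (st + b + δ)) = b := by
    rw [setDist_Icc_Icc_of_le hst (by linarith) (by linarith)]
    ring
  rw [isolatedExceedance_add_left ha hδ.le, isolatedExceedance_add_right hb hδ.le,
    isolatedExceedance, hgaps]
  constructor
  · intro hab
    exact measure_staysBelowOn_le_of_setDist_le hA hCont hMeas hst hcd (by linarith) (by ring)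
      hdisjR hdisjL (by rwa [hdistL, hdistR])
  · intro hba
    exact measure_staysBelowOn_le_of_setDist_le hA hCont hMeas hst hcd (by linarith) (by ring)
      hdisjL hdisjR (by rwa [hdistL, hdistR])

theorem measure_isolatedExceedance_le_of_min_le (hA : MonotoneJointExceedance P X u)
    (hCont : ∀ ω, Continuous (X ω)) (hMeas : ∀ s : ℝ, Measurable (fun ω => X ω s))
    (hst : 0 ≤ st) {a' b' : ℝ} (ha : 0 ≤ a) (hb : 0 ≤ b) (ha' : 0 ≤ a') (hb' : 0 ≤ b')
    (hsum : a' + b' = a + b) (hmin : min a b ≤ min a' b') :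
    P (isolatedExceedance X u st a' b') ≤ P (isolatedExceedance X u st a b) := by
  rcases le_total a b with hab | hba
  · rw [min_eq_left hab, le_min_iff] at hmin
    have h := (measure_isolatedExceedance_add_le hA hCont hMeas hst ha hb'
      (sub_nonneg.2 hmin.1)).1 hmin.2
    rwa [add_sub_cancel, show b' + (a' - a) = b by linarith] at h
  · rw [min_eq_right hba, le_min_iff] at hmin
    have h := (measure_isolatedExceedance_add_le hA hCont hMeas hst ha' hb
      (sub_nonneg.2 hmin.2)).2 hmin.1
    rwa [add_sub_cancel, show a' + (b' - b) = a by linarith] at h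

theorem measure_exceedsOn_inter_staysBelowOn_right_eq_left (hA : MonotoneJointExceedance P X u)
    (hCont : ∀ ω, Continuous (X ω)) (hMeas : ∀ s : ℝ, Measurable (fun ω => X ω s))
    (hst : 0 ≤ st) {L : ℝ} (hL : 0 < L) :
    P (exceedsOn X u (Icc 0 st) ∩ staysBelowOn X u (Icc st (st + L))) =
      P (exceedsOn X u (Icc 0 st) ∩ staysBelowOn X u (Icc (-L) 0)) := by
  have hnoH : staysBelowOn X u (⋃ i : Fin 0, Icc ((![] : Fin 0 → ℝ) i) (![] i)) = univ := by
    simp [staysBelowOn]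
  have hdisjL : Disjoint (Icc (-L) 0) (interior (Icc 0 st)) :=
    Icc_disjoint_interior_Icc_of_le le_rfl
  have hdisjR : Disjoint (Icc st (st + L)) (interior (Icc 0 st)) :=
    Icc_disjoint_interior_Icc_of_ge le_rfl
  have hdist : setDist (Icc 0 st) (Icc (-L) 0) = setDist (Icc 0 st) (Icc st (st + L)) := by
    rw [setDist_comm, setDist_Icc_Icc_of_le (by linarith) le_rfl hst,
      setDist_Icc_Icc_of_le hst le_rfl (by linarith)]
    ring
  have hfar := fun {c₁ d₁ c₂ d₂ : ℝ} => measure_staysBelowOn_le_of_setDist_le (c₁ := c₁)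
    (d₁ := d₁) (c₂ := c₂) (d₂ := d₂) hA hCont hMeas hst (c := ![]) (d := ![]) finZeroElim
  simp only [hnoH, inter_univ] at hfar
  exact le_antisymm (hfar (by linarith) (by ring) hdisjL hdisjR hdist.ge)
    (hfar (by linarith) (by ring) hdisjR hdisjL hdist.le)

end Measure

section Boundary

variable {Ω : Type*} [MeasurableSpace Ω]

/-- The function `μ(h)` of the paper. -/
def exclusiveExceedanceProb (P : Measure Ω) (X : Ω → ℝ → ℝ) (u S st h : ℝ) : ℝ≥0∞ :=
  P {ω | u ≤ sSup (X ω '' Icc h (st + h)) ∧ sSup (X ω '' (Icc 0 S \ Icc h (st + h))) < u}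

variable {P : Measure Ω} {X : Ω → ℝ → ℝ} {u S st : ℝ}

theorem exclusiveExceedanceProb_eq (hCont : ∀ ω, Continuous (X ω))
    (hMeas : ∀ s : ℝ, Measurable (fun ω => X ω s))
    (hStat : ∀ t : ℝ,
      Measure.map (fun ω => fun s => X ω (s + t)) P = Measure.map (fun ω => X ω) P)
    {h : ℝ} (hne : (Icc (-h) (S - h) \ Icc 0 st).Nonempty) :
    exclusiveExceedanceProb P X u S st h =
      P (exceedsOn X u (Icc 0 st) ∩
        staysBelowOn X u (closure (Icc (-h) (S - h) \ Icc 0 st))) := by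
  rw [exclusiveExceedanceProb, measure_le_sSup_and_sSup_lt_eq_preimage_add hCont hMeas hStat h,
    preimage_sdiff, preimage_add_const_Icc, preimage_add_const_Icc, sub_self,
    add_sub_cancel_right, zero_sub, setOf_le_sSup_and_sSup_lt_eq hCont _
      ((Metric.isBounded_Icc _ _).subset sdiff_subset) hne]

theorem exclusiveExceedanceProb_eq_isolatedExceedance (hCont : ∀ ω, Continuous (X ω))
    (hMeas : ∀ s : ℝ, Measurable (fun ω => X ω s))
    (hStat : ∀ t : ℝ,
      Measure.map (fun ω => fun s => X ω (s + t)) P = Measure.map (fun ω => X ω) P)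
    (hst : 0 ≤ st) {h : ℝ} (h₀ : 0 < h) (hS : h < S - st) :
    exclusiveExceedanceProb P X u S st h = P (isolatedExceedance X u st h (S - st - h)) := by
  rw [exclusiveExceedanceProb_eq hCont hMeas hStat
      ⟨-h, ⟨le_rfl, by linarith⟩, fun hmem => by linarith [hmem.1]⟩,
    Icc_diff_Icc_eq_Ico_union_Ioc (by linarith) (by linarith), closure_union,
    closure_Ico (by linarith), closure_Ioc (by linarith), isolatedExceedance,
    show st + (S - st - h) = S - h by ring]

theorem exclusiveExceedanceProb_zero (hCont : ∀ ω, Continuous (X ω))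
    (hMeas : ∀ s : ℝ, Measurable (fun ω => X ω s))
    (hStat : ∀ t : ℝ,
      Measure.map (fun ω => fun s => X ω (s + t)) P = Measure.map (fun ω => X ω) P)
    (hst : 0 ≤ st) (hS : st < S) :
    exclusiveExceedanceProb P X u S st 0 =
      P (exceedsOn X u (Icc 0 st) ∩ staysBelowOn X u (Icc st S)) := by
  rw [exclusiveExceedanceProb_eq hCont hMeas hStat
      ⟨S, ⟨by linarith, by linarith⟩, fun hmem => by linarith [hmem.2]⟩,
    Icc_diff_Icc_eq_Ico_union_Ioc (by linarith) (by linarith), neg_zero, Ico_self,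
    empty_union, sub_zero, closure_Ioc hS.ne]

theorem exclusiveExceedanceProb_right_end (hCont : ∀ ω, Continuous (X ω))
    (hMeas : ∀ s : ℝ, Measurable (fun ω => X ω s))
    (hStat : ∀ t : ℝ,
      Measure.map (fun ω => fun s => X ω (s + t)) P = Measure.map (fun ω => X ω) P)
    (hst : 0 ≤ st) (hS : st < S) :
    exclusiveExceedanceProb P X u S st (S - st) =
      P (exceedsOn X u (Icc 0 st) ∩ staysBelowOn X u (Icc (-(S - st)) 0)) := by
  rw [exclusiveExceedanceProb_eq hCont hMeas hStat
      ⟨-(S - st), ⟨le_rfl, by linarith⟩, fun hmem => by linarith [hmem.1]⟩,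
    Icc_diff_Icc_eq_Ico_union_Ioc (by linarith) (by linarith), sub_sub_cancel, Ioc_self,
    union_empty, closure_Ico (by linarith)]

variable [IsFiniteMeasure P]

theorem exclusiveExceedanceProb_ends_eq (hA : MonotoneJointExceedance P X u)
    (hCont : ∀ ω, Continuous (X ω)) (hMeas : ∀ s : ℝ, Measurable (fun ω => X ω s))
    (hStat : ∀ t : ℝ,
      Measure.map (fun ω => fun s => X ω (s + t)) P = Measure.map (fun ω => X ω) P)
    (hst : 0 ≤ st) (hS : st < S) :
    exclusiveExceedanceProb P X u S st (S - st) = exclusiveExceedanceProb P X u S st 0 := by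
  rw [exclusiveExceedanceProb_right_end hCont hMeas hStat hst hS,
    exclusiveExceedanceProb_zero hCont hMeas hStat hst hS]
  have h := measure_exceedsOn_inter_staysBelowOn_right_eq_left hA hCont hMeas hst (sub_pos.2 hS)
  rwa [add_sub_cancel, eq_comm] at h

theorem exclusiveExceedanceProb_le_at_zero (hA : MonotoneJointExceedance P X u)
    (hCont : ∀ ω, Continuous (X ω)) (hMeas : ∀ s : ℝ, Measurable (fun ω => X ω s))
    (hStat : ∀ t : ℝ,
      Measure.map (fun ω => fun s => X ω (s + t)) P = Measure.map (fun ω => X ω) P)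
    (hst : 0 ≤ st) (hS : st < S) {h : ℝ} (hh : h ∈ Icc 0 (S - st)) :
    exclusiveExceedanceProb P X u S st h ≤ exclusiveExceedanceProb P X u S st 0 := by
  rcases hh.1.eq_or_lt with rfl | h₀
  · exact le_rfl
  rcases hh.2.eq_or_lt with rfl | hlt
  · exact (exclusiveExceedanceProb_ends_eq hA hCont hMeas hStat hst hS).le
  rw [exclusiveExceedanceProb_eq_isolatedExceedance hCont hMeas hStat hst h₀ hlt,
    exclusiveExceedanceProb_zero hCont hMeas hStat hst hS]
  calc P (isolatedExceedance X u st h (S - st - h))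
      ≤ P (isolatedExceedance X u st 0 (S - st)) :=
        measure_isolatedExceedance_le_of_min_le hA hCont hMeas hst le_rfl (by linarith) h₀.le
          (by linarith) (by ring)
          (by rw [min_eq_left (by linarith)]; exact le_min h₀.le (by linarith))
    _ ≤ P (exceedsOn X u (Icc 0 st) ∩ staysBelowOn X u (Icc st S)) := by
        rw [isolatedExceedance, add_sub_cancel]
        exact measure_mono (inter_subset_inter_right _ (staysBelowOn_anti subset_union_right))

end Boundary

theorem boundary_effect_of_stationary_sup_exceedance_general
    {Ω : Type*} [MeasurableSpace Ω] (P : Measure Ω) [IsProbabilityMeasure P]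
    (X : Ω → ℝ → ℝ)
    (hCont : ∀ ω, Continuous (X ω))
    (hMeas : ∀ s : ℝ, Measurable (fun ω => X ω s))
    (hStat : ∀ t : ℝ,
      Measure.map (fun ω => fun s => X ω (s + t)) P = Measure.map (fun ω => X ω) P)
    (u : ℝ)
    (hAssump : ∀ a b : ℝ, a ≤ b → ∀ (n : ℕ) (c d : Fin n → ℝ), (∀ i, c i ≤ d i) →
      ∀ c₁ d₁ c₂ d₂ : ℝ, c₁ < d₁ → d₁ - c₁ = d₂ - c₂ →
      Disjoint (Set.Icc c₁ d₁) (interior (Set.Icc a b)) →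
      Disjoint (Set.Icc c₂ d₂) (interior (Set.Icc a b)) →
      setDist (Set.Icc a b) (Set.Icc c₂ d₂) ≤ setDist (Set.Icc a b) (Set.Icc c₁ d₁) →
      P {ω | u ≤ sSup (X ω '' Set.Icc a b) ∧ u ≤ sSup (X ω '' Set.Icc c₁ d₁) ∧
          ∀ i, ∀ s ∈ Set.Icc (c i) (d i), X ω s < u}
        ≤ P {ω | u ≤ sSup (X ω '' Set.Icc a b) ∧ u ≤ sSup (X ω '' Set.Icc c₂ d₂) ∧
            ∀ i, ∀ s ∈ Set.Icc (c i) (d i), X ω s < u})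
    (S st : ℝ) (hst : st ∈ Set.Ioo 0 S) :
    ∀ h₁ ∈ Set.Icc (0 : ℝ) (S - st), ∀ h₂ ∈ Set.Icc (0 : ℝ) (S - st),
      min h₁ (S - st - h₁) ≤ min h₂ (S - st - h₂) →
      P {ω | u ≤ sSup (X ω '' Set.Icc h₂ (st + h₂)) ∧
          sSup (X ω '' (Set.Icc 0 S \ Set.Icc h₂ (st + h₂))) < u}
        ≤ P {ω | u ≤ sSup (X ω '' Set.Icc h₁ (st + h₁)) ∧
            sSup (X ω '' (Set.Icc 0 S \ Set.Icc h₁ (st + h₁))) < u} := by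
  obtain ⟨hst₀, hstS⟩ := hst
  intro h₁ hh₁ h₂ hh₂ hmin
  change exclusiveExceedanceProb P X u S st h₂ ≤ exclusiveExceedanceProb P X u S st h₁
  have hmax := exclusiveExceedanceProb_le_at_zero hAssump hCont hMeas hStat hst₀.le hstS hh₂
  rcases hh₁.1.eq_or_lt with rfl | h₁pos
  · exact hmax
  rcases hh₁.2.eq_or_lt with rfl | h₁lt
  · rwa [exclusiveExceedanceProb_ends_eq hAssump hCont hMeas hStat hst₀.le hstS]
  have h₂pos : 0 < h₂ ∧ 0 < S - st - h₂ :=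
    lt_min_iff.1 ((lt_min h₁pos (by linarith)).trans_le hmin)
  rw [exclusiveExceedanceProb_eq_isolatedExceedance hCont hMeas hStat hst₀.le h₁pos h₁lt,
    exclusiveExceedanceProb_eq_isolatedExceedance hCont hMeas hStat hst₀.le h₂pos.1
      (by linarith)]
  exact measure_isolatedExceedance_le_of_min_le hAssump hCont hMeas hst₀.le h₁pos.le
    (by linarith) h₂pos.1.le h₂pos.2.le (by ring) hmin

/-- **Theorem 1 of the paper, `d = 1`.** Let `X` be a strictly stationary
real-valued process with continuous sample paths satisfying the monotone-joint-exceedance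
assumption (Assumption 1) at level `u`: for every closed bounded interval `I = [a,b]`,
every event `H` of the form `{X < u on K}` with `K` a finite union of closed bounded
intervals, and all closed bounded intervals `J₁, J₂` of equal positive length, each
disjoint from the interior of `I`, with `dist(I, J₁) ≥ dist(I, J₂)`, one has
`P(sup_I X ≥ u, sup_{J₁} X ≥ u, H) ≤ P(sup_I X ≥ u, sup_{J₂} X ≥ u, H)`.
Fix `S > 0`, `s̃ ∈ (0, S)` and for `h ∈ [0, S − s̃]` set
`μ(h) = P(sup_{[h, s̃+h]} X ≥ u, sup_{[0,S]∖[h, s̃+h]} X < u)`. Then `μ` is a decreasing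
function of the distance of `[h, s̃+h]` to the boundary of `[0,S]`: if
`min(h₁, S−s̃−h₁) ≤ min(h₂, S−s̃−h₂)` then `μ(h₁) ≥ μ(h₂)`. -/
theorem boundary_effect_of_stationary_sup_exceedance
    {Ω : Type*} [MeasurableSpace Ω] (P : Measure Ω) [IsProbabilityMeasure P]
    (X : Ω → ℝ → ℝ)
    (hCont : ∀ ω, Continuous (X ω))
    (hMeas : ∀ s : ℝ, Measurable (fun ω => X ω s))
    (hStat : ∀ t : ℝ,
      Measure.map (fun ω => fun s => X ω (s + t)) P = Measure.map (fun ω => X ω) P)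
    (u : ℝ)
    (hAssump : ∀ a b : ℝ, a ≤ b → ∀ (n : ℕ) (c d : Fin n → ℝ), (∀ i, c i ≤ d i) →
      ∀ c₁ d₁ c₂ d₂ : ℝ, c₁ < d₁ → d₁ - c₁ = d₂ - c₂ →
      Disjoint (Set.Icc c₁ d₁) (interior (Set.Icc a b)) →
      Disjoint (Set.Icc c₂ d₂) (interior (Set.Icc a b)) →
      setDist (Set.Icc a b) (Set.Icc c₂ d₂) ≤ setDist (Set.Icc a b) (Set.Icc c₁ d₁) →
      P {ω | u ≤ sSup (X ω '' Set.Icc a b) ∧ u ≤ sSup (X ω '' Set.Icc c₁ d₁) ∧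
          ∀ i, ∀ s ∈ Set.Icc (c i) (d i), X ω s < u}
        ≤ P {ω | u ≤ sSup (X ω '' Set.Icc a b) ∧ u ≤ sSup (X ω '' Set.Icc c₂ d₂) ∧
            ∀ i, ∀ s ∈ Set.Icc (c i) (d i), X ω s < u})
    (S st : ℝ) (hS : 0 < S) (hst : st ∈ Set.Ioo 0 S) :
    ∀ h₁ ∈ Set.Icc (0 : ℝ) (S - st), ∀ h₂ ∈ Set.Icc (0 : ℝ) (S - st),
      min h₁ (S - st - h₁) ≤ min h₂ (S - st - h₂) →
      P {ω | u ≤ sSup (X ω '' Set.Icc h₂ (st + h₂)) ∧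
          sSup (X ω '' (Set.Icc 0 S \ Set.Icc h₂ (st + h₂))) < u}
        ≤ P {ω | u ≤ sSup (X ω '' Set.Icc h₁ (st + h₁)) ∧
            sSup (X ω '' (Set.Icc 0 S \ Set.Icc h₁ (st + h₁))) < u} :=
  boundary_effect_of_stationary_sup_exceedance_general P X hCont hMeas hStat u hAssump S st hst
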